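/- Let H be a separable analytic reproducing kernel Hilbert space of E-valued functions on 𝔻 on which the multiplication operator M_z is bounded, and let E₀ be a subset of E whose linear span is dense in E. If for every η ∈ E₀ one has (1/(n!)²)‖K_{n,η}‖²_H → 0 as n → ∞, then M_z* is topologically mixing on H. -/

import Mathlib

/-!
With the normalised kernels `k n η = K n η / n!`, which represent the Taylor coefficients at `0`,
the relation `M_z* k (n+1) η = k n η`, `M_z* k 0 η = 0` makes `M_z*` a backward shift. Hence every
vector of the span `D` of the `k n η` (`η ∈ E₀`) is killed by a power of `M_z*`, while the hypothesis
`‖k n η‖ → 0` lets each `k n η` be written as `M_z*ʲ (k (n+j) η)` with `k (n+j) η → 0`. Since an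
`f ⊥ D` has vanishing Taylor coefficients, `D` is dense, and the Kitai criterion gives mixing.
-/

open Metric Filter ContinuousLinearMap

open scoped InnerProductSpace Nat Topology

theorem iteratedDerivWithin_succ_id_smul {𝕜 F : Type*} [NontriviallyNormedField 𝕜]
    [NormedAddCommGroup F] [NormedSpace 𝕜 F] {s : Set 𝕜} {x : 𝕜} {g : 𝕜 → F}
    (hs : UniqueDiffOn 𝕜 s) (hx : x ∈ s) {n : ℕ} (hg : ContDiffWithinAt 𝕜 (n + 1) g s x) :
    iteratedDerivWithin (n + 1) (fun w => w • g w) s x =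
      x • iteratedDerivWithin (n + 1) g s x + ((n : 𝕜) + 1) • iteratedDerivWithin n g s x := by
  have h := iteratedDerivWithin_smul (f := id) hx hs (by fun_prop) (by exact_mod_cast hg)
  rw [show (id • g) = fun w => w • g w from rfl] at h
  rw [h, Finset.sum_range_succ', Finset.sum_range_succ']
  simp only [iteratedDerivWithin_id hx hs, Nat.add_eq_zero_iff, one_ne_zero, and_false, and_self,
    ↓reduceIte, Nat.add_eq_right, Nat.reduceSubDiff, zero_smul, nsmul_zero, Finset.sum_const_zero,
    zero_add, Nat.choose_one_right, add_tsub_cancel_right, one_smul, Nat.choose_zero_right,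
    tsub_zero]
  rw [add_comm, ← Nat.cast_smul_eq_nsmul 𝕜]
  push_cast
  rfl

theorem Complex.eqOn_zero_of_iteratedDerivWithin_eq_zero {E : Type*} [NormedAddCommGroup E]
    [NormedSpace ℂ E] [CompleteSpace E] {g : ℂ → E} {c : ℂ} {r : ℝ}
    (hg : DifferentiableOn ℂ g (ball c r)) (h : ∀ n, iteratedDerivWithin n g (ball c r) c = 0) :
    Set.EqOn g 0 (ball c r) := by
  intro z hz
  have hc : c ∈ ball c r := mem_ball_self (pos_of_mem_ball hz)
  have hderiv (n : ℕ) : iteratedDeriv n g c = 0 := by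
    rw [← iteratedDerivWithin_of_isOpen isOpen_ball hc, h]
  have hsum := Complex.hasSum_taylorSeries_on_ball hg hz
  simp only [hderiv, smul_zero] at hsum
  exact hsum.unique hasSum_zero

namespace ContinuousLinearMap

variable {R X : Type*} [Semiring R] [TopologicalSpace X] [AddCommMonoid X] [Module R X]

theorem pow_apply_add_of_apply_succ {T : X →L[R] X} {e : ℕ → X}
    (hsucc : ∀ n, T (e (n + 1)) = e n) (j n : ℕ) : (T ^ j) (e (n + j)) = e n := by
  induction j with
  | zero => rfl
  | succ j ih => rw [pow_succ, mul_apply_eq_comp, ← add_assoc, hsucc, ih]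

variable (T : X →L[R] X) [ContinuousAdd X]

/-- The Kitai criterion. -/
theorem exists_forall_ge_pow_preimage_inter_nonempty {D₁ D₂ : Set X}
    (hD₁ : Dense D₁) (hD₂ : Dense D₂)
    (hnull : ∀ x ∈ D₁, Tendsto (fun n : ℕ => (T ^ n) x) atTop (𝓝 0))
    (hrightInv : ∀ y ∈ D₂, ∃ u : ℕ → X, Tendsto u atTop (𝓝 0) ∧ ∀ n, (T ^ n) (u n) = y)
    {U V : Set X} (hU : IsOpen U) (hV : IsOpen V) (hU' : U.Nonempty) (hV' : V.Nonempty) :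
    ∃ N : ℕ, ∀ j ≥ N, ((T ^ j) ⁻¹' U ∩ V).Nonempty := by
  obtain ⟨y, hyU, hyD⟩ := hD₂.inter_open_nonempty U hU hU'
  obtain ⟨x, hxV, hxD⟩ := hD₁.inter_open_nonempty V hV hV'
  obtain ⟨u, hu, hTu⟩ := hrightInv y hyD
  have hV_ev : ∀ᶠ n in atTop, x + u n ∈ V := by
    have := tendsto_const_nhds (x := x).add hu
    rw [add_zero] at this
    exact this.eventually (hV.mem_nhds hxV)
  have hU_ev : ∀ᶠ n in atTop, (T ^ n) (x + u n) ∈ U := by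
    have := (hnull x hxD).add (tendsto_const_nhds (x := y))
    rw [zero_add] at this
    filter_upwards [this.eventually (hU.mem_nhds hyU)] with n hn
    rwa [map_add, hTu]
  obtain ⟨N, hN⟩ := eventually_atTop.1 (hU_ev.and hV_ev)
  exact ⟨N, fun j hj => ⟨x + u j, hN j hj⟩⟩

variable [ContinuousConstSMul R X]

def orbitNullSubmodule : Submodule R X where
  carrier := {x | Tendsto (fun n : ℕ => (T ^ n) x) atTop (𝓝 0)}
  zero_mem' := by simp [tendsto_const_nhds]
  add_mem' {x y} hx hy := by
    change Tendsto _ _ _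
    simpa only [map_add, add_zero] using hx.add hy
  smul_mem' c x hx := by
    change Tendsto _ _ _
    simpa only [map_smul, smul_zero] using hx.const_smul c

def rightInvNullSubmodule : Submodule R X where
  carrier := {y | ∃ u : ℕ → X, Tendsto u atTop (𝓝 0) ∧ ∀ n, (T ^ n) (u n) = y}
  zero_mem' := ⟨0, tendsto_const_nhds, fun n => map_zero _⟩
  add_mem' := by
    rintro x y ⟨u, hu, hTu⟩ ⟨v, hv, hTv⟩
    exact ⟨fun n => u n + v n, by simpa only [add_zero] using hu.add hv, fun n => by
      rw [map_add, hTu, hTv]⟩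
  smul_mem' := by
    rintro c x ⟨u, hu, hTu⟩
    exact ⟨fun n => c • u n, by simpa only [smul_zero] using hu.const_smul c, fun n => by
      rw [map_smul, hTu]⟩

section BackwardShift

variable {T} {e : ℕ → X} (hsucc : ∀ n, T (e (n + 1)) = e n)
include hsucc

theorem mem_rightInvNullSubmodule_of_apply_succ (he : Tendsto e atTop (𝓝 0)) (n : ℕ) :
    e n ∈ rightInvNullSubmodule T :=
  ⟨fun j => e (n + j), by
    simpa only [Function.comp_def, add_comm _ n] using he.comp (tendsto_add_atTop_nat n),
    fun j => pow_apply_add_of_apply_succ hsucc j n⟩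

theorem mem_orbitNullSubmodule_of_apply_succ (hzero : T (e 0) = 0) (n : ℕ) :
    e n ∈ orbitNullSubmodule T := by
  have hkill : (T ^ (n + 1)) (e n) = 0 := by
    simpa only [pow_succ', mul_apply_eq_comp, zero_add, hzero] using
      congrArg T (pow_apply_add_of_apply_succ hsucc n 0)
  refine tendsto_const_nhds.congr' (eventually_atTop.2 ⟨n + 1, fun j hj => ?_⟩)
  obtain ⟨i, rfl⟩ := Nat.exists_eq_add_of_le hj
  show 0 = (T ^ (n + 1 + i)) (e n)
  rw [add_comm (n + 1), pow_add, mul_apply_eq_comp, hkill, map_zero]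

end BackwardShift

end ContinuousLinearMap

section NormalizedKernels

variable {H E : Type*} [NormedAddCommGroup H] [InnerProductSpace ℂ H] [CompleteSpace H]
  [NormedAddCommGroup E] [InnerProductSpace ℂ E]
  {ι : H →ₗ[ℂ] (ℂ → E)} {k : ℕ → E → H}
  -- `k n η` represents `f ↦ ⟪n-th Taylor coefficient of ι f at 0, η⟫`; it will be `K n η / n!`.
  (hk : ∀ n η f, ⟪f, k n η⟫_ℂ = ⟪(n ! : ℂ)⁻¹ • iteratedDerivWithin n (ι f) (ball 0 1) 0, η⟫_ℂ)
include hk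

section Adjoint

variable {Mz : H →L[ℂ] H}
  (hMz : ∀ f : H, ∀ w ∈ ball (0 : ℂ) 1, ι (Mz f) w = w • ι f w)
include hMz

theorem adjoint_apply_eq_zero_of_inner_eq_taylorCoeff (η : E) : adjoint Mz (k 0 η) = 0 := by
  refine ext_inner_left ℂ fun f => ?_
  rw [adjoint_inner_right, hk, iteratedDerivWithin_zero, hMz f 0 (mem_ball_self one_pos)]
  simp only [zero_smul, smul_zero, inner_zero_left, inner_zero_right]

variable [CompleteSpace E]

theorem adjoint_apply_succ_of_inner_eq_taylorCoeff
    (hanal : ∀ f : H, DifferentiableOn ℂ (ι f) (ball 0 1)) (n : ℕ) (η : E) :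
    adjoint Mz (k (n + 1) η) = k n η := by
  refine ext_inner_left ℂ fun f => ?_
  have h0 : (0 : ℂ) ∈ ball (0 : ℂ) 1 := mem_ball_self one_pos
  have hderiv : iteratedDerivWithin (n + 1) (ι (Mz f)) (ball 0 1) 0 =
      ((n : ℂ) + 1) • iteratedDerivWithin n (ι f) (ball 0 1) 0 := by
    rw [iteratedDerivWithin_congr (hMz f) h0, iteratedDerivWithin_succ_id_smul
      isOpen_ball.uniqueDiffOn h0 (((hanal f).contDiffOn isOpen_ball).contDiffWithinAt h0),
      zero_smul, zero_add]
  have hfac : ((n + 1)! : ℂ)⁻¹ * ((n : ℂ) + 1) = (n ! : ℂ)⁻¹ := by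
    rw [Nat.factorial_succ]
    push_cast
    field_simp
  rw [adjoint_inner_right, hk, hk, hderiv, smul_smul, hfac]

end Adjoint

variable [CompleteSpace E]

theorem dense_span_of_inner_eq_taylorCoeff
    (hinj : ∀ f g : H, Set.EqOn (ι f) (ι g) (ball (0 : ℂ) 1) → f = g)
    (hanal : ∀ f : H, DifferentiableOn ℂ (ι f) (ball 0 1))
    {E₀ : Set E} (hE₀ : Dense (Submodule.span ℂ E₀ : Set E)) :
    Dense (Submodule.span ℂ {x | ∃ n, ∃ η ∈ E₀, k n η = x} : Set H) := by
  rw [Submodule.dense_iff_topologicalClosure_eq_top, Submodule.topologicalClosure_eq_top_iff,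
    Submodule.eq_bot_iff]
  intro f hf
  have hcoeff (n : ℕ) : iteratedDerivWithin n (ι f) (ball 0 1) 0 = 0 := by
    set v := (n ! : ℂ)⁻¹ • iteratedDerivWithin n (ι f) (ball 0 1) 0
    have hperp : E₀ ⊆ LinearMap.ker (innerₛₗ ℂ v) := fun η hη => by
      rw [SetLike.mem_coe, LinearMap.mem_ker, innerₛₗ_apply_apply, ← hk]
      refine Submodule.inner_left_of_mem_orthogonal (Submodule.subset_span ?_) hf
      exact ⟨n, η, hη, rfl⟩
    have hv : v = 0 := hE₀.eq_zero_of_inner_left ℂ fun w hw => Submodule.span_le.2 hperp hw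
    simpa [v, Nat.factorial_ne_zero] using hv
  exact hinj f 0 (by simpa using Complex.eqOn_zero_of_iteratedDerivWithin_eq_zero (hanal f) hcoeff)

end NormalizedKernels

theorem stmt7_general {H E : Type*}
    [NormedAddCommGroup H] [InnerProductSpace ℂ H] [CompleteSpace H]
    [NormedAddCommGroup E] [InnerProductSpace ℂ E] [CompleteSpace E]
    (ι : H →ₗ[ℂ] (ℂ → E))
    (hinj : ∀ f g : H, Set.EqOn (ι f) (ι g) (ball (0 : ℂ) 1) → f = g)
    (hanal : ∀ f : H, DifferentiableOn ℂ (ι f) (ball (0 : ℂ) 1))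
    (Mz : H →L[ℂ] H)
    (hMz : ∀ f : H, ∀ w ∈ ball (0 : ℂ) 1, ι (Mz f) w = w • ι f w)
    (K : ℕ → E → H)
    (hK : ∀ (n : ℕ) (η : E) (f : H),
      (inner ℂ f (K n η) : ℂ) =
        (inner ℂ (iteratedDerivWithin n (ι f) (ball (0 : ℂ) 1) 0) η : ℂ))
    (E₀ : Set E)
    (hE₀ : Dense ((Submodule.span ℂ E₀ : Submodule ℂ E) : Set E))
    (hlim : ∀ η ∈ E₀,
      Tendsto (fun n : ℕ => (1 / (n.factorial : ℝ) ^ 2) * ‖K n η‖ ^ 2) atTop (nhds 0)) :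
    ∀ U V : Set H, IsOpen U → IsOpen V → U.Nonempty → V.Nonempty →
      ∃ N : ℕ, ∀ j ≥ N, ((((adjoint Mz) ^ j) ⁻¹' U) ∩ V).Nonempty := by
  set k : ℕ → E → H := fun n η => (n ! : ℂ)⁻¹ • K n η
  have hk (n : ℕ) (η : E) (f : H) :
      ⟪f, k n η⟫_ℂ = ⟪(n ! : ℂ)⁻¹ • iteratedDerivWithin n (ι f) (ball 0 1) 0, η⟫_ℂ := by
    simp [k, hK, mul_comm]
  have hk_null (η : E) (hη : η ∈ E₀) : Tendsto (fun n => k n η) atTop (𝓝 0) := by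
    have hsq : Tendsto (fun n => ‖k n η‖ ^ 2) atTop (𝓝 0) := by
      refine (hlim η hη).congr fun n => ?_
      simp [k, norm_smul, mul_pow]
    rw [tendsto_zero_iff_norm_tendsto_zero]
    simpa using hsq.sqrt
  have hD := dense_span_of_inner_eq_taylorCoeff hk hinj hanal hE₀
  intro U V hU hV hU' hV'
  refine exists_forall_ge_pow_preimage_inter_nonempty _ hD hD
    (fun x hx => (Submodule.span_le (p := orbitNullSubmodule _)).2 ?_ hx)
    (fun x hx => (Submodule.span_le (p := rightInvNullSubmodule _)).2 ?_ hx)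
    hU hV hU' hV'
  · rintro _ ⟨n, η, -, rfl⟩
    exact mem_orbitNullSubmodule_of_apply_succ (e := (k · η))
      (adjoint_apply_succ_of_inner_eq_taylorCoeff hk hMz hanal · η)
      (adjoint_apply_eq_zero_of_inner_eq_taylorCoeff hk hMz η) n
  · rintro _ ⟨n, η, hη, rfl⟩
    exact mem_rightInvNullSubmodule_of_apply_succ (e := (k · η))
      (adjoint_apply_succ_of_inner_eq_taylorCoeff hk hMz hanal · η) (hk_null η hη) n

/-- Theorem (mixing part): Let `H` be a separable analytic reproducing kernel Hilbert
space of `E`-valued functions on the unit disc on which `M_z` is bounded, and let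
`E₀ ⊆ E` have dense linear span. If `(1/(n!)²)‖K_{n,η}‖² → 0` as `n → ∞` for every
`η ∈ E₀`, then `M_z*` is topologically mixing. -/
theorem stmt7 {H E : Type*}
    [NormedAddCommGroup H] [InnerProductSpace ℂ H] [CompleteSpace H]
    [TopologicalSpace.SeparableSpace H]
    [NormedAddCommGroup E] [InnerProductSpace ℂ E] [CompleteSpace E]
    (ι : H →ₗ[ℂ] (ℂ → E))
    (hinj : ∀ f g : H, Set.EqOn (ι f) (ι g) (ball (0 : ℂ) 1) → f = g)
    (hanal : ∀ f : H, DifferentiableOn ℂ (ι f) (ball (0 : ℂ) 1))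
    (heval : ∀ w ∈ ball (0 : ℂ) 1, Continuous fun f : H => ι f w)
    (Mz : H →L[ℂ] H)
    (hMz : ∀ f : H, ∀ w ∈ ball (0 : ℂ) 1, ι (Mz f) w = w • ι f w)
    (K : ℕ → E → H)
    (hK : ∀ (n : ℕ) (η : E) (f : H),
      (inner ℂ f (K n η) : ℂ) =
        (inner ℂ (iteratedDerivWithin n (ι f) (ball (0 : ℂ) 1) 0) η : ℂ))
    (E₀ : Set E)
    (hE₀ : Dense ((Submodule.span ℂ E₀ : Submodule ℂ E) : Set E))
    (hlim : ∀ η ∈ E₀,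
      Tendsto (fun n : ℕ => (1 / (n.factorial : ℝ) ^ 2) * ‖K n η‖ ^ 2) atTop (nhds 0)) :
    ∀ U V : Set H, IsOpen U → IsOpen V → U.Nonempty → V.Nonempty →
      ∃ N : ℕ, ∀ j ≥ N, ((((adjoint Mz) ^ j) ⁻¹' U) ∩ V).Nonempty :=
  stmt7_general ι hinj hanal Mz hMz K hK E₀ hE₀ hlim
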